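/- For every integer d ≥ 2, every ℓ ∈ 𝔤_d*, and every X ∈ 𝔤_d, the functional f = ad*_X ℓ satisfies f(Z_1) = ⋯ = f(Z_d) = 0 and Q_d(f(Y_1), …, f(Y_{2d})) = 0, where Q_d(η_1,…,η_{2d}) = η_{2d−1}·Σ_{i=1}^{d−1}(η_{2i}·∏_{j=1, j≠i}^{d−1} η_{2j−1}) − η_{2d}·∏_{j=1}^{d−1} η_{2j−1}. In particular, the set {ad*_X ℓ : X ∈ 𝔤_d, ℓ ∈ 𝔤_d*} is contained in the closed set {f ∈ 𝔤_d* : f(Z_i) = 0 for all i and Q_d(f(Y_1),…,f(Y_{2d})) = 0}. -/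

import Mathlib

/-- The coadjoint action of the Lie algebra: `(coad X f) W = f ⁅W, X⁆`. -/
def coad {L : Type*} [LieRing L] [LieAlgebra ℝ L] (X : L) (f : Module.Dual ℝ L) :
    Module.Dual ℝ L where
  toFun W := f ⁅W, X⁆
  map_add' a b := by simp [add_lie]
  map_smul' c a := by simp [smul_lie]

/-- The set `{ad*_X ℓ : X ∈ 𝔤, ℓ ∈ 𝔤*}` of all coadjoint tangent vectors. -/
def adStar (L : Type*) [LieRing L] [LieAlgebra ℝ L] : Set (Module.Dual ℝ L) :=
  {g | ∃ (X : L) (ℓ : Module.Dual ℝ L), g = coad X ℓ}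

/-- Coordinates of a linear functional with respect to the dual basis of `B`;
this identifies `𝔤*` with `ι → ℝ`, carrying the canonical topology. -/
noncomputable def coords {ι : Type*} {L : Type*} [LieRing L] [LieAlgebra ℝ L]
    (B : Module.Basis ι ℝ L) (f : Module.Dual ℝ L) : ι → ℝ := fun a => f (B a)

/-- The cortex `Cor(𝔤*)`: the closure (in the canonical topology of the
finite-dimensional space `𝔤*`, transported to coordinates via the dual basis)
of the set `{ad*_X ℓ : X ∈ 𝔤, ℓ ∈ 𝔤*}`. -/
def corSet {ι : Type*} {L : Type*} [LieRing L] [LieAlgebra ℝ L] (B : Module.Basis ι ℝ L) :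
    Set (Module.Dual ℝ L) :=
  {f | coords B f ∈ closure (coords B '' adStar L)}

/-- Index type for the basis of `𝔤_d`: first component indexes `Z_1,…,Z_d`, the second
the odd `Y`'s `Y_1, Y_3, …, Y_{2d-1}`, the third the even `Y`'s `Y_2, Y_4, …, Y_{2d}`,
and the fourth `X_1,…,X_d`. -/
abbrev Idx (d : ℕ) : Type := Fin d ⊕ (Fin d ⊕ (Fin d ⊕ Fin d))

/-- Index of `Z_{i+1}`. -/
def zI {d : ℕ} (i : Fin d) : Idx d := Sum.inl i
/-- Index of `Y_{2i+1}` (odd-indexed `Y`). -/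
def yoI {d : ℕ} (i : Fin d) : Idx d := Sum.inr (Sum.inl i)
/-- Index of `Y_{2i+2}` (even-indexed `Y`). -/
def yeI {d : ℕ} (i : Fin d) : Idx d := Sum.inr (Sum.inr (Sum.inl i))
/-- Index of `X_{i+1}`. -/
def xI {d : ℕ} (i : Fin d) : Idx d := Sum.inr (Sum.inr (Sum.inr i))

/-- Value of `⁅X_{i+1}, Y_{2i+2}⁆`: `Z_{i+2}` if `i + 1 < d`, and `Z_2 + ⋯ + Z_d`
if `i + 1 = d`. -/
def gdW {d : ℕ} (hd : 2 ≤ d) {V : Type*} [AddCommGroup V] (B : Idx d → V) (i : Fin d) : V :=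
  if h : (i : ℕ) < d - 1 then B (zI ⟨(i : ℕ) + 1, by omega⟩)
  else ∑ m ∈ Finset.univ.filter (fun m : Fin d => 0 < (m : ℕ)), B (zI m)

/-- The bracket `⁅B a, B b⁆` of two basis vectors of `𝔤_d`, given by the structure
constants: `⁅X_i, Y_{2i-1}⁆ = Z_1` for `i = 1,…,d`, `⁅X_k, Y_{2k}⁆ = Z_{k+1}` for
`k = 1,…,d-1`, `⁅X_d, Y_{2d}⁆ = Z_2 + ⋯ + Z_d`, all other brackets of basis
vectors being zero (up to antisymmetry). -/
def gdBr {d : ℕ} (hd : 2 ≤ d) {V : Type*} [AddCommGroup V] (B : Idx d → V) :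
    Idx d → Idx d → V
  | Sum.inr (Sum.inr (Sum.inr i)), Sum.inr (Sum.inl j) =>
      if i = j then B (zI ⟨0, by omega⟩) else 0
  | Sum.inr (Sum.inl j), Sum.inr (Sum.inr (Sum.inr i)) =>
      if i = j then -(B (zI ⟨0, by omega⟩)) else 0
  | Sum.inr (Sum.inr (Sum.inr i)), Sum.inr (Sum.inr (Sum.inl j)) =>
      if i = j then gdW hd B i else 0
  | Sum.inr (Sum.inr (Sum.inl j)), Sum.inr (Sum.inr (Sum.inr i)) =>
      if i = j then -(gdW hd B i) else 0
  | _, _ => 0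

/-- The homogeneous polynomial `Q_d` of degree `d`, evaluated at the odd coordinates
`ηo` (`ηo i = η_{2i+1}`) and the even coordinates `ηe` (`ηe i = η_{2i+2}`):
`Q_d = η_{2d-1}·Σ_{i=1}^{d-1}(η_{2i}·∏_{j=1, j≠i}^{d-1} η_{2j-1})
      − η_{2d}·∏_{j=1}^{d-1} η_{2j-1}`. -/
def Qd (d : ℕ) (hd : 2 ≤ d) (ηo ηe : Fin d → ℝ) : ℝ :=
  ηo ⟨d - 1, by omega⟩ *
      (∑ i ∈ Finset.univ.filter (fun i : Fin d => (i : ℕ) < d - 1),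
        ηe i * ∏ j ∈ Finset.univ.filter (fun j : Fin d => (j : ℕ) < d - 1 ∧ j ≠ i), ηo j)
    - ηe ⟨d - 1, by omega⟩ *
        ∏ j ∈ Finset.univ.filter (fun j : Fin d => (j : ℕ) < d - 1), ηo j

/-!
The centre `span (Z_i)` pairs trivially with `ad*_X ℓ`, and on `Y_{2j-1}`, `Y_{2j}` only the
`X_j`-coordinate `c_j` of `X` contributes: `f(Y_{2j-1}) = c_j z` and `f(Y_{2j}) = c_j w_j` with
`z = -ℓ(Z_1)` and `w_j = -ℓ⁅X_j, Y_{2j}⁆`. Since `⁅X_d, Y_{2d}⁆ = Σ_{k<d} ⁅X_k, Y_{2k}⁆`, we get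
`w_d = w_1 + ⋯ + w_{d-1}`, and then each summand of the first term of `Q_d` equals
`c_d w_i ∏_{j<d} c_j z`, so the first term is `c_d w_d ∏_{j<d} c_j z`, which is the second.
-/

open Finset

@[simp]
theorem coad_apply {L : Type*} [LieRing L] [LieAlgebra ℝ L] (X : L) (ℓ : Module.Dual ℝ L)
    (W : L) : coad X ℓ W = ℓ ⁅W, X⁆ :=
  rfl

theorem coad_apply_eq_sum_repr {ι L : Type*} [Fintype ι] [LieRing L] [LieAlgebra ℝ L]
    (B : Module.Basis ι ℝ L) (X : L) (ℓ : Module.Dual ℝ L) (W : L) :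
    coad X ℓ W = ∑ b, B.repr X b * ℓ ⁅W, B b⁆ := by
  conv_lhs => rw [coad_apply, ← B.sum_repr X, lie_sum, map_sum]
  simp only [lie_smul, map_smul, smul_eq_mul]

section

variable {d : ℕ} (hd : 2 ≤ d) {V : Type*} [AddCommGroup V] (B : Idx d → V)

theorem gdW_last_eq_sum :
    gdW hd B ⟨d - 1, by omega⟩ =
      ∑ i ∈ univ.filter (fun i : Fin d => (i : ℕ) < d - 1), gdW hd B i := by
  obtain ⟨n, rfl⟩ : ∃ n, d = n + 1 := ⟨d - 1, by omega⟩
  rw [gdW, dif_neg (by simp), sum_filter, sum_filter, Fin.sum_univ_succ, Fin.sum_univ_castSucc]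
  simp [gdW, Fin.succ]

theorem gdBr_zI (i : Fin d) (a : Idx d) : gdBr hd B (zI i) a = 0 := by
  rcases a with _ | _ | _ | _ <;> rfl

theorem gdBr_yoI (j : Fin d) (a : Idx d) :
    gdBr hd B (yoI j) a = if a = xI j then -B (zI ⟨0, by omega⟩) else 0 := by
  rcases a with _ | _ | _ | i <;> simp [gdBr, yoI, xI, eq_comm]

theorem gdBr_yeI (j : Fin d) (a : Idx d) :
    gdBr hd B (yeI j) a = if a = xI j then -gdW hd B j else 0 := by
  rcases a with _ | _ | _ | i <;> simp +contextual [gdBr, yeI, xI, eq_comm]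

end

theorem Qd_mul_eq_zero (d : ℕ) (hd : 2 ≤ d) (c w : Fin d → ℝ) (z : ℝ)
    (hw : w ⟨d - 1, by omega⟩ = ∑ i ∈ univ.filter (fun i : Fin d => (i : ℕ) < d - 1), w i) :
    Qd d hd (fun j => c j * z) (fun j => c j * w j) = 0 := by
  rw [Qd]
  set S := univ.filter (fun i : Fin d => (i : ℕ) < d - 1)
  have hS : ∀ i, univ.filter (fun j : Fin d => (j : ℕ) < d - 1 ∧ j ≠ i) = S.erase i := by
    intro i; ext j; simp [S, and_comm]
  have hterm : ∀ i ∈ S, c ⟨d - 1, by omega⟩ * z * (c i * w i * ∏ j ∈ S.erase i, c j * z) =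
      c ⟨d - 1, by omega⟩ * w i * ∏ j ∈ S, c j * z := by
    intro i hi
    rw [← mul_prod_erase S _ hi]
    ring
  simp only [hS]
  rw [mul_sum, sum_congr rfl hterm, ← sum_mul, ← mul_sum, ← hw]
  ring

section

variable {d : ℕ} (hd : 2 ≤ d) {L : Type*} [LieRing L] [LieAlgebra ℝ L]
  {B : Module.Basis (Idx d) ℝ L} (hbr : ∀ a b : Idx d, ⁅B a, B b⁆ = gdBr hd B a b)
  (ℓ : Module.Dual ℝ L) (X : L)
include hbr

theorem coad_zI (i : Fin d) : coad X ℓ (B (zI i)) = 0 := by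
  simp [coad_apply_eq_sum_repr B, hbr, gdBr_zI]

theorem coad_yoI (j : Fin d) :
    coad X ℓ (B (yoI j)) = B.repr X (xI j) * -ℓ (B (zI ⟨0, by omega⟩)) := by
  rw [coad_apply_eq_sum_repr B]
  simp only [hbr, gdBr_yoI, apply_ite ℓ, map_neg, map_zero, mul_ite, mul_zero, sum_ite_eq',
    mem_univ, if_true]

theorem coad_yeI (j : Fin d) :
    coad X ℓ (B (yeI j)) = B.repr X (xI j) * -ℓ (gdW hd B j) := by
  rw [coad_apply_eq_sum_repr B]
  simp only [hbr, gdBr_yeI, apply_ite ℓ, map_neg, map_zero, mul_ite, mul_zero, sum_ite_eq',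
    mem_univ, if_true]

theorem Qd_coad_eq_zero :
    Qd d hd (fun i => coad X ℓ (B (yoI i))) (fun i => coad X ℓ (B (yeI i))) = 0 := by
  simp only [coad_yoI hd hbr ℓ X, coad_yeI hd hbr ℓ X]
  apply Qd_mul_eq_zero
  simp only [gdW_last_eq_sum, map_sum, sum_neg_distrib]

end

/-- For every `d ≥ 2`, every `ℓ ∈ 𝔤_d*` and every `X ∈ 𝔤_d`, the functional
`f = ad*_X ℓ` satisfies `f(Z_1) = ⋯ = f(Z_d) = 0` and `Q_d(f(Y_1),…,f(Y_{2d})) = 0`; in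
particular `{ad*_X ℓ}` is contained in the closed set cut out by these equations. -/
theorem adStar_subset_variety_gd (d : ℕ) (hd : 2 ≤ d) (L : Type) [LieRing L]
    [LieAlgebra ℝ L] (B : Module.Basis (Idx d) ℝ L)
    (hbr : ∀ a b : Idx d, ⁅B a, B b⁆ = gdBr hd (fun c => B c) a b) :
    (∀ (ℓ : Module.Dual ℝ L) (X : L),
        (∀ i : Fin d, coad X ℓ (B (zI i)) = 0) ∧
        Qd d hd (fun i => coad X ℓ (B (yoI i))) (fun i => coad X ℓ (B (yeI i))) = 0)
    ∧ adStar L ⊆ {f : Module.Dual ℝ L |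
        (∀ i : Fin d, f (B (zI i)) = 0) ∧
        Qd d hd (fun i => f (B (yoI i))) (fun i => f (B (yeI i))) = 0} := by
  refine ⟨fun ℓ X => ⟨coad_zI hd hbr ℓ X, Qd_coad_eq_zero hd hbr ℓ X⟩, ?_⟩
  rintro _ ⟨X, ℓ, rfl⟩
  exact ⟨coad_zI hd hbr ℓ X, Qd_coad_eq_zero hd hbr ℓ X⟩
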